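/- arXiv:2604.23306 — 2 statements merged into one kernel-verified Lean document; each statement's English description precedes it below -/
import Mathlib

section
/- Let n ≥ 2, let a < b, let g_1, …, g_{2n} ∈ C¹[a,b] be linearly independent, let ω be a continuous, strictly positive weight function on [a,b], let a = x_0 < x_1 < … < x_n = b be closed nodes, and suppose σ_1, …, σ_{n−1} and η_0, …, η_n in span{g_1, …, g_{2n}} satisfy the quasi-Hermite–Lagrange conditions: σ_i(x_k) = 0 and η_i(x_k) = δ_{ik} for all k = 0, …, n, and σ_i'(x_k) = δ_{ik} and η_i'(x_k) = 0 for all k = 1, …, n−1 (where i ranges over 1, …, n−1 for the σ_i and over 0, …, n for the η_i). Then there exist weights w_0, …, w_n with ∫_a^b g_j(x)ω(x) dx = Σ_{k=0}^n w_k g_j(x_k) for all j = 1, …, 2n if and only if ∫_a^b σ_i(x)ω(x) dx = 0 for all i = 1, …, n−1; and in that case the weights are necessarily w_i = ∫_a^b η_i(x)ω(x) dx for i = 0, …, n. -/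
/-!
Both the integral `f ↦ ∫ f ω` and a quadrature rule `f ↦ ∑ w k f (x k)` are linear, so exactness
on the `g j` is exactness on their span `V`. The quasi-Hermite–Lagrange conditions make the `2n`
functions `σ i, η k` linearly independent (evaluate at the nodes, then differentiate at the
interior nodes), so, being `2n` independent elements of a space spanned by `2n` functions, they
span `V`. On them the rule with weights `∫ η k ω` is exact precisely when every `∫ σ i ω`
vanishes, and exactness on `η i` forces `w i = ∫ η i ω`.
-/

open MeasureTheory

/-- The `k`-th interior node index: `k + 1` as an element of `Fin (n + 1)`,
for `k : Fin (n - 1)`. -/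
def interiorIdx (n : ℕ) (k : Fin (n - 1)) : Fin (n + 1) :=
  ⟨(k : ℕ) + 1, by have := k.isLt; omega⟩

open Set Submodule

theorem contDiff_of_mem_span {s : Set (ℝ → ℝ)} {m : WithTop ℕ∞} (hs : ∀ f ∈ s, ContDiff ℝ m f)
    {f : ℝ → ℝ} (hf : f ∈ span ℝ s) : ContDiff ℝ m f := by
  induction hf using Submodule.span_induction with
  | mem f hf => exact hs f hf
  | zero => exact contDiff_const
  | add f₁ f₂ _ _ ih₁ ih₂ => exact ih₁.add ih₂
  | smul c f _ ih => exact ih.const_smul c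

theorem integral_mul_eq_sum_of_mem_span {ι : Type*} [Fintype ι] {a b : ℝ} {ω : ℝ → ℝ}
    {x w : ι → ℝ} {s : Set (ℝ → ℝ)}
    (hint : ∀ f ∈ s, IntervalIntegrable (fun t => f t * ω t) volume a b)
    (hexact : ∀ f ∈ s, ∫ t in a..b, f t * ω t = ∑ k, w k * f (x k))
    {f : ℝ → ℝ} (hf : f ∈ span ℝ s) :
    ∫ t in a..b, f t * ω t = ∑ k, w k * f (x k) := by
  suffices IntervalIntegrable (fun t => f t * ω t) volume a b ∧
      ∫ t in a..b, f t * ω t = ∑ k, w k * f (x k) from this.2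
  induction hf using Submodule.span_induction with
  | mem f hf => exact ⟨hint f hf, hexact f hf⟩
  | zero => simp
  | add f₁ f₂ _ _ ih₁ ih₂ =>
    simp only [Pi.add_apply, add_mul, mul_add, Finset.sum_add_distrib]
    exact ⟨ih₁.1.add ih₂.1, by rw [intervalIntegral.integral_add ih₁.1 ih₂.1, ih₁.2, ih₂.2]⟩
  | smul c f _ ih =>
    simp only [Pi.smul_apply, smul_eq_mul, mul_assoc, mul_left_comm _ c, ← Finset.mul_sum]
    exact ⟨ih.1.const_mul c, by rw [intervalIntegral.integral_const_mul, ih.2]⟩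

theorem span_range_eq_of_linearIndependent_of_card_le {K M ι κ : Type*} [DivisionRing K]
    [AddCommGroup M] [Module K M] [Fintype ι] [Fintype κ] {g : ι → M} {h : κ → M}
    (hh : LinearIndependent K h) (hmem : ∀ i, h i ∈ span K (range g))
    (hcard : Fintype.card ι ≤ Fintype.card κ) :
    span K (range h) = span K (range g) := by
  have : FiniteDimensional K (span K (range g)) := .span_of_finite K (finite_range g)
  refine eq_of_le_of_finrank_le (span_le.mpr (forall_mem_range.mpr hmem)) ?_
  rw [finrank_span_eq_card hh]
  exact (finrank_range_le_card g).trans hcard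

theorem linearIndependent_sum_elim_of_hermite {ι κ : Type*} [Fintype ι] [Fintype κ]
    [DecidableEq ι] [DecidableEq κ] {σ : ι → ℝ → ℝ} {η : κ → ℝ → ℝ} {y : ι → ℝ} {z : κ → ℝ}
    (hσd : ∀ i, Differentiable ℝ (σ i)) (hσz : ∀ i k, σ i (z k) = 0)
    (hσ' : ∀ i k, deriv (σ i) (y k) = if i = k then 1 else 0)
    (hηz : ∀ i k, η i (z k) = if i = k then 1 else 0) :
    LinearIndependent ℝ (Sum.elim σ η) := by
  rw [Fintype.linearIndependent_iff]
  intro c hc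
  have hc' : ∀ t, ∑ i, c (.inl i) * σ i t + ∑ k, c (.inr k) * η k t = 0 := fun t => by
    simpa [Fintype.sum_sum_type] using congrFun hc t
  have hη0 : ∀ k, c (.inr k) = 0 := fun k => by
    simpa [hσz, hηz] using hc' (z k)
  have hσsum : (fun t => ∑ i, c (.inl i) * σ i t) = 0 := funext fun t => by
    simpa [hη0] using hc' t
  have hσ0 : ∀ k, c (.inl k) = 0 := fun k => by
    have hderiv := congrArg (deriv · (y k)) hσsum
    simp only [Pi.zero_def, deriv_const] at hderiv
    rw [deriv_fun_sum fun i _ => ((hσd i).const_mul (c (.inl i))).differentiableAt] at hderiv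
    simpa [deriv_const_mul_field', hσ'] using hderiv
  rintro (i | k)
  · exact hσ0 i
  · exact hη0 k

theorem gauss_lobatto_weights_iff_sigma_integrals_vanish_general
    (n : ℕ) (a b : ℝ) (hab : a < b)
    (g : Fin (2 * n) → ℝ → ℝ) (hg : ∀ j, ContDiff ℝ 1 (g j))
    (ω : ℝ → ℝ) (hω : ContinuousOn ω (Set.Icc a b))
    (x : Fin (n + 1) → ℝ)
    (σ : Fin (n - 1) → ℝ → ℝ) (η : Fin (n + 1) → ℝ → ℝ)
    (hσmem : ∀ i, σ i ∈ Submodule.span ℝ (Set.range g))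
    (hηmem : ∀ i, η i ∈ Submodule.span ℝ (Set.range g))
    (hσ0 : ∀ (i : Fin (n - 1)) (k : Fin (n + 1)), σ i (x k) = 0)
    (hσ' : ∀ i k : Fin (n - 1),
      deriv (σ i) (x (interiorIdx n k)) = if i = k then 1 else 0)
    (hη1 : ∀ i k : Fin (n + 1), η i (x k) = if i = k then 1 else 0) :
    ((∃ w : Fin (n + 1) → ℝ, ∀ j, ∫ t in a..b, g j t * ω t = ∑ k, w k * g j (x k)) ↔
      ∀ i, ∫ t in a..b, σ i t * ω t = 0) ∧
    ∀ w : Fin (n + 1) → ℝ,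
      (∀ j, ∫ t in a..b, g j t * ω t = ∑ k, w k * g j (x k)) →
      ∀ i, w i = ∫ t in a..b, η i t * ω t := by
  have hsmooth : ∀ f ∈ span ℝ (range g), ContDiff ℝ 1 f :=
    fun f => contDiff_of_mem_span (forall_mem_range.mpr hg)
  have hint : ∀ f ∈ span ℝ (range g), IntervalIntegrable (fun t => f t * ω t) volume a b :=
    fun f hf => ((hsmooth f hf).continuous.continuousOn.mul
      (by rwa [uIcc_of_le hab.le])).intervalIntegrable
  have hexact (w : Fin (n + 1) → ℝ) (hw : ∀ j, ∫ t in a..b, g j t * ω t = ∑ k, w k * g j (x k))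
      {f : ℝ → ℝ} (hf : f ∈ span ℝ (range g)) : ∫ t in a..b, f t * ω t = ∑ k, w k * f (x k) :=
    integral_mul_eq_sum_of_mem_span (fun f hf => hint f (subset_span hf))
      (forall_mem_range.mpr hw) hf
  have hspan : span ℝ (range (Sum.elim σ η)) = span ℝ (range g) := by
    refine span_range_eq_of_linearIndependent_of_card_le
      (linearIndependent_sum_elim_of_hermite
        (fun i => (hsmooth _ (hσmem i)).differentiable one_ne_zero) hσ0 hσ' hη1)
      (Sum.forall.mpr ⟨hσmem, hηmem⟩) ?_
    simp only [Fintype.card_sum, Fintype.card_fin]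
    omega
  refine ⟨⟨fun ⟨w, hw⟩ i => by simpa [hσ0] using hexact w hw (hσmem i), fun hσint => ?_⟩,
    fun w hw i => by simpa [hη1] using (hexact w hw (hηmem i)).symm⟩
  refine ⟨fun k => ∫ t in a..b, η k t * ω t, fun j => ?_⟩
  refine integral_mul_eq_sum_of_mem_span (s := range (Sum.elim σ η))
    (fun f hf => hint f (hspan ▸ subset_span hf)) ?_ (hspan ▸ subset_span (mem_range_self j))
  rintro _ ⟨i | i, rfl⟩
  · simp [hσint, hσ0]
  · simp [hη1]

/-- Characterisation of generalised Gauss–Lobatto quadrature weights via a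
quasi-Hermite–Lagrange basis: given closed nodes `a = x 0 < … < x n = b` and
functions `σ 1, …, σ (n-1)` and `η 0, …, η n` in the span of `g 1, …, g 2n`
satisfying the quasi-Hermite–Lagrange conditions, weights making the closed rule
exact for all `g j` exist iff `∫ σ i ω = 0` for all `i`, in which case
necessarily `w i = ∫ η i ω`. -/
theorem gauss_lobatto_weights_iff_sigma_integrals_vanish
    (n : ℕ) (hn : 2 ≤ n) (a b : ℝ) (hab : a < b)
    (g : Fin (2 * n) → ℝ → ℝ) (hg : ∀ j, ContDiff ℝ 1 (g j))
    (hgli : LinearIndependent ℝ g)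
    (ω : ℝ → ℝ) (hω : ContinuousOn ω (Set.Icc a b))
    (hωpos : ∀ t ∈ Set.Icc a b, 0 < ω t)
    (x : Fin (n + 1) → ℝ) (hx : StrictMono x)
    (hxa : x 0 = a) (hxb : x (Fin.last n) = b)
    (σ : Fin (n - 1) → ℝ → ℝ) (η : Fin (n + 1) → ℝ → ℝ)
    (hσmem : ∀ i, σ i ∈ Submodule.span ℝ (Set.range g))
    (hηmem : ∀ i, η i ∈ Submodule.span ℝ (Set.range g))
    (hσ0 : ∀ (i : Fin (n - 1)) (k : Fin (n + 1)), σ i (x k) = 0)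
    (hσ' : ∀ i k : Fin (n - 1),
      deriv (σ i) (x (interiorIdx n k)) = if i = k then 1 else 0)
    (hη1 : ∀ i k : Fin (n + 1), η i (x k) = if i = k then 1 else 0)
    (hη' : ∀ (i : Fin (n + 1)) (k : Fin (n - 1)),
      deriv (η i) (x (interiorIdx n k)) = 0) :
    ((∃ w : Fin (n + 1) → ℝ, ∀ j, ∫ t in a..b, g j t * ω t = ∑ k, w k * g j (x k)) ↔
      ∀ i, ∫ t in a..b, σ i t * ω t = 0) ∧
    ∀ w : Fin (n + 1) → ℝ,
      (∀ j, ∫ t in a..b, g j t * ω t = ∑ k, w k * g j (x k)) →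
      ∀ i, w i = ∫ t in a..b, η i t * ω t :=
  gauss_lobatto_weights_iff_sigma_integrals_vanish_general n a b hab g hg ω hω x σ η hσmem hηmem hσ0
    hσ' hη1
end

section
/- Under the hypotheses of the two-domain semi-discrete SBP–SAT advection scheme — a > 0; σ ≤ a/2; P_L, P_R diagonal positive definite; Q_L + Q_Lᵀ and Q_R + Q_Rᵀ equal to diag(−1,0,…,0,1) of the respective sizes; u'(t) = −a P_L⁻¹ Q_L u(t) + σ P_L⁻¹ e_N (u_N(t) − v_0(t)) − a P_L⁻¹ e_0 u_0(t) and v'(t) = −a P_R⁻¹ Q_R v(t) + (σ − a) P_R⁻¹ ê_0 (v_0(t) − u_N(t)) (i.e., homogeneous boundary data g_L ≡ 0) — the discrete energy t ↦ u(t)ᵀ P_L u(t) + v(t)ᵀ P_R v(t) is nonincreasing in t; in particular the scheme is energy stable. -/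
/-!
Since `P_L` and `P_R` are symmetric, the energy has derivative `2 uᵀ P_L u' + 2 vᵀ P_R v'`, and
multiplying the scheme by `P_L`, `P_R` removes the inverses. The SBP property `Q + Qᵀ = B`
collapses `uᵀ Q u` to the boundary term `(u_N² - u_0²) / 2`, so the rate of change of the energy is
`-a u_0² - a v_M² + (2σ - a) (u_N - v_0)²`, which is nonpositive when `a > 0` and `σ ≤ a / 2`.
-/

open Matrix

/-- The boundary matrix `B = diag(-1, 0, …, 0, 1)` of size `(n+1) × (n+1)`. -/
noncomputable def sbpBoundaryMatrix (n : ℕ) : Matrix (Fin (n + 1)) (Fin (n + 1)) ℝ :=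
  Matrix.diagonal fun i => (if i = Fin.last n then (1 : ℝ) else 0) + (if i = 0 then -1 else 0)

section Derivatives

variable {𝕜 ι : Type*} [NontriviallyNormedField 𝕜] [Fintype ι] {t : 𝕜}

theorem HasDerivAt.dotProduct {u v : 𝕜 → ι → 𝕜} {u' v' : ι → 𝕜}
    (hu : HasDerivAt u u' t) (hv : HasDerivAt v v' t) :
    HasDerivAt (fun s => u s ⬝ᵥ v s) (u' ⬝ᵥ v t + u t ⬝ᵥ v') t := by
  unfold _root_.dotProduct
  rw [← Finset.sum_add_distrib]
  exact HasDerivAt.fun_sum fun i _ => (hasDerivAt_pi.1 hu i).mul (hasDerivAt_pi.1 hv i)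

theorem HasDerivAt.mulVec {κ : Type*} (A : Matrix κ ι 𝕜) {u : 𝕜 → ι → 𝕜} {u' : ι → 𝕜}
    (hu : HasDerivAt u u' t) : HasDerivAt (fun s => A *ᵥ u s) (A *ᵥ u') t :=
  hasDerivAt_pi.2 fun i => by
    simpa [Matrix.mulVec] using (hasDerivAt_const t (A i)).dotProduct hu

theorem HasDerivAt.dotProduct_mulVec_self {A : Matrix ι ι 𝕜} (hA : Aᵀ = A)
    {u : 𝕜 → ι → 𝕜} {u' : ι → 𝕜} (hu : HasDerivAt u u' t) :
    HasDerivAt (fun s => u s ⬝ᵥ (A *ᵥ u s)) (2 * (u t ⬝ᵥ (A *ᵥ u'))) t := by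
  convert hu.dotProduct (hu.mulVec A) using 1
  rw [two_mul, dotProduct_mulVec u', ← mulVec_transpose, hA, dotProduct_comm]

end Derivatives

theorem dotProduct_add_transpose_mulVec_self {R ι : Type*} [CommSemiring R] [Fintype ι]
    (Q : Matrix ι ι R) (x : ι → R) : x ⬝ᵥ ((Q + Qᵀ) *ᵥ x) = 2 * (x ⬝ᵥ (Q *ᵥ x)) := by
  rw [add_mulVec, dotProduct_add, mulVec_transpose, dotProduct_comm x (x ᵥ* Q),
    ← dotProduct_mulVec, two_mul]

theorem dotProduct_sbpBoundaryMatrix_mulVec_self (n : ℕ) (x : Fin (n + 1) → ℝ) :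
    x ⬝ᵥ (sbpBoundaryMatrix n *ᵥ x) = x (Fin.last n) ^ 2 - x 0 ^ 2 := by
  simp only [sbpBoundaryMatrix, dotProduct, mulVec_diagonal, add_mul, mul_add, ite_mul, mul_ite,
    one_mul, zero_mul, mul_zero, Finset.sum_add_distrib, Finset.sum_ite_eq', Finset.mem_univ, if_true]
  ring

theorem mulVec_nonsing_inv_mulVec {R ι : Type*} [CommRing R] [Fintype ι] [DecidableEq ι]
    {A : Matrix ι ι R} (hA : IsUnit A.det) (x : ι → R) : A *ᵥ (A⁻¹ *ᵥ x) = x := by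
  rw [mulVec_mulVec, mul_nonsing_inv A hA, one_mulVec]

theorem isUnit_det_diagonal {K ι : Type*} [Field K] [Fintype ι] [DecidableEq ι] {p : ι → K}
    (hp : ∀ i, p i ≠ 0) : IsUnit (diagonal p).det := by
  simpa [det_diagonal, Finset.prod_ne_zero_iff] using hp

theorem two_mul_dotProduct_mulVec_self_of_add_transpose_eq_sbpBoundaryMatrix {n : ℕ}
    {Q : Matrix (Fin (n + 1)) (Fin (n + 1)) ℝ} (hQ : Q + Qᵀ = sbpBoundaryMatrix n)
    (x : Fin (n + 1) → ℝ) : 2 * (x ⬝ᵥ (Q *ᵥ x)) = x (Fin.last n) ^ 2 - x 0 ^ 2 := by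
  rw [← dotProduct_add_transpose_mulVec_self, hQ, dotProduct_sbpBoundaryMatrix_mulVec_self]

/-- Energy stability of the two-domain semi-discrete SBP–SAT scheme for the
advection equation with homogeneous boundary data `g_L ≡ 0` and `σ ≤ a/2`:
the discrete energy `t ↦ uᵀ P_L u + vᵀ P_R v` is nonincreasing. -/
theorem sbp_sat_advection_energy_stable
    (N M : ℕ) (a σ : ℝ) (ha : 0 < a) (hσ : σ ≤ a / 2)
    (pL : Fin (N + 1) → ℝ) (hpL : ∀ i, 0 < pL i)
    (QL : Matrix (Fin (N + 1)) (Fin (N + 1)) ℝ)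
    (hQL : QL + QLᵀ = sbpBoundaryMatrix N)
    (pR : Fin (M + 1) → ℝ) (hpR : ∀ i, 0 < pR i)
    (QR : Matrix (Fin (M + 1)) (Fin (M + 1)) ℝ)
    (hQR : QR + QRᵀ = sbpBoundaryMatrix M)
    (u : ℝ → Fin (N + 1) → ℝ) (v : ℝ → Fin (M + 1) → ℝ)
    (hu : ∀ t : ℝ, HasDerivAt u
      ((-a) • ((Matrix.diagonal pL)⁻¹ *ᵥ (QL *ᵥ u t))
        + (σ * (u t (Fin.last N) - v t 0)) •
            ((Matrix.diagonal pL)⁻¹ *ᵥ Pi.single (Fin.last N) 1)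
        - (a * u t 0) • ((Matrix.diagonal pL)⁻¹ *ᵥ Pi.single 0 1)) t)
    (hv : ∀ t : ℝ, HasDerivAt v
      ((-a) • ((Matrix.diagonal pR)⁻¹ *ᵥ (QR *ᵥ v t))
        + ((σ - a) * (v t 0 - u t (Fin.last N))) •
            ((Matrix.diagonal pR)⁻¹ *ᵥ Pi.single 0 1)) t) :
    Antitone (fun t =>
      u t ⬝ᵥ (Matrix.diagonal pL *ᵥ u t) + v t ⬝ᵥ (Matrix.diagonal pR *ᵥ v t)) := by
  refine antitone_of_hasDerivAt_nonpos (fun t =>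
    ((hu t).dotProduct_mulVec_self (diagonal_transpose pL)).add
      ((hv t).dotProduct_mulVec_self (diagonal_transpose pR))) fun t => ?_
  have hPL := isUnit_det_diagonal fun i => (hpL i).ne'
  have hPR := isUnit_det_diagonal fun i => (hpR i).ne'
  simp only [mulVec_add, mulVec_sub, mulVec_smul, mulVec_nonsing_inv_mulVec hPL,
    mulVec_nonsing_inv_mulVec hPR, dotProduct_add, dotProduct_sub, dotProduct_smul,
    dotProduct_single, smul_eq_mul, mul_one, Pi.zero_apply]
  have hL := two_mul_dotProduct_mulVec_self_of_add_transpose_eq_sbpBoundaryMatrix hQL (u t)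
  have hR := two_mul_dotProduct_mulVec_self_of_add_transpose_eq_sbpBoundaryMatrix hQR (v t)
  calc _ = -(a * u t 0 ^ 2) - a * v t (Fin.last M) ^ 2
        + (2 * σ - a) * (u t (Fin.last N) - v t 0) ^ 2 := by
          linear_combination (-a) * hL + (-a) * hR
    _ ≤ 0 := by
      have hcoeff : 2 * σ - a ≤ 0 := by linarith
      nlinarith [sq_nonneg (u t 0), sq_nonneg (v t (Fin.last M)),
        sq_nonneg (u t (Fin.last N) - v t 0)]
end
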